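/- (Soundness and completeness of ranking functions for SAST.) A PARS P over A is strongly almost surely terminating (SAST) if and only if there exist ε > 0 and a ranking function f : A → ℝ≥0 for P with parameter ε. -/

import Mathlib

open scoped NNReal ENNReal

/-- A finite (probability) distribution on `A`: a finitely supported weight
function with total weight `1`. -/
structure FinDist (A : Type*) where
  w : A →₀ ℝ≥0
  sum_one : w.sum (fun _ p => p) = 1

/-- Multidistributions on `A`: finite multisets of weighted elements `p:a`. -/
abbrev MD (A : Type*) := Multiset (ℝ≥0 × A)

namespace MD

/-- The total weight `|μ|` of a multidistribution. -/
def wt {A : Type*} (μ : MD A) : ℝ≥0 := (μ.map Prod.fst).sum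

/-- Scalar multiplication `p·μ`. -/
def smul {A : Type*} (p : ℝ≥0) (μ : MD A) : MD A :=
  μ.map fun qa => (p * qa.1, qa.2)

/-- The expected value `E(f(μ)) = Σ_{p:a ∈ μ} p·f(a)`. -/
def exp {A : Type*} (f : A → ℝ≥0) (μ : MD A) : ℝ≥0 :=
  (μ.map fun pa => pa.1 * f pa.2).sum

end MD

namespace FinDist

/-- The multidistribution associated with a finite distribution. -/
def toMD {A : Type*} (d : FinDist A) : MD A :=
  d.w.support.val.map fun a => (d.w a, a)

/-- The expected value `E(f(d)) = Σ_a d(a)·f(a)`. -/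
def exp {A : Type*} (f : A → ℝ≥0) (d : FinDist A) : ℝ≥0 :=
  d.w.sum fun a p => p * f a

/-- Pushforward of a finite distribution along a map; this is
`overline(h(d))`, the collapse of the elementwise image of `d`. -/
noncomputable def map {A B : Type*} (h : A → B) (d : FinDist A) : FinDist B :=
  ⟨Finsupp.mapDomain h d.w, by
    rw [Finsupp.sum_mapDomain_index (fun _ => rfl) (fun _ _ _ => rfl)]
    exact d.sum_one⟩

/-- The Dirac distribution. -/
noncomputable def dirac {A : Type*} (a : A) : FinDist A :=
  ⟨Finsupp.single a 1, by simp⟩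

end FinDist

/-- A PARS over `A`: a set of probabilistic reductions `a → d`. -/
abbrev PARS (A : Type*) := A → FinDist A → Prop

/-- `a` is terminal (a normal form) if it has no reduction. -/
def PARS.Terminal {A : Type*} (P : PARS A) (a : A) : Prop := ∀ d, ¬ P a d

/-- The probabilistic reduction relation `⇒_P` on multidistributions. -/
inductive PARS.Step {A : Type*} (P : PARS A) : MD A → MD A → Prop
  | term (a : A) : P.Terminal a → PARS.Step P {(1, a)} 0
  | rule (a : A) (d : FinDist A) : P a d → PARS.Step P {(1, a)} d.toMD
  | conv (n : ℕ) (p : Fin n → ℝ≥0) (μ ρ : Fin n → MD A) :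
      (∑ i, p i) ≤ 1 → (∀ i, PARS.Step P (μ i) (ρ i)) →
      PARS.Step P (∑ i, MD.smul (p i) (μ i)) (∑ i, MD.smul (p i) (ρ i))

/-- An (infinite) reduction sequence of `P`. -/
def PARS.RedSeq {A : Type*} (P : PARS A) (μs : ℕ → MD A) : Prop :=
  ∀ n, P.Step (μs n) (μs (n + 1))

/-- A reduction sequence of `P` starting from `μ`. -/
def PARS.RedSeqFrom {A : Type*} (P : PARS A) (μ : MD A) (μs : ℕ → MD A) : Prop :=
  μs 0 = μ ∧ P.RedSeq μs

/-- The expected derivation length `adl(⃗μ) = Σ_{n ≥ 1} |μ_n|`. -/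
noncomputable def adl {A : Type*} (μs : ℕ → MD A) : ℝ≥0∞ :=
  ∑' n : ℕ, (MD.wt (μs (n + 1)) : ℝ≥0∞)

/-- The expected derivation height `adh_P(a)`. -/
noncomputable def adh {A : Type*} (P : PARS A) (a : A) : ℝ≥0∞ :=
  ⨆ (μs : ℕ → MD A) (_ : P.RedSeqFrom {(1, a)} μs), adl μs

/-- Strong almost sure termination. -/
def PARS.SAST {A : Type*} (P : PARS A) : Prop := ∀ a, adh P a < ⊤

/-- Almost sure termination. -/
def PARS.AST {A : Type*} (P : PARS A) : Prop :=
  ∀ μs : ℕ → MD A, P.RedSeq μs →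
    Filter.Tendsto (fun n => MD.wt (μs n)) Filter.atTop (nhds 0)

/-- `f` is a (probabilistic) ranking function for `P` with parameter `ε`. -/
def PARS.Ranking {A : Type*} (P : PARS A) (ε : ℝ≥0) (f : A → ℝ≥0) : Prop :=
  ∀ a d, P a d → f a ≥ ε + FinDist.exp f d

section Helpers
variable {A : Type*}
namespace MD
@[simp] lemma wt_zero : wt (0 : MD A) = 0 := rfl
@[simp] lemma wt_add (μ ν : MD A) : wt (μ + ν) = wt μ + wt ν := by simp [wt]
@[simp] lemma wt_smul (p : ℝ≥0) (μ : MD A) : wt (smul p μ) = p * wt μ := by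
  simp only [wt, smul, Multiset.map_map, Function.comp]
  rw [← Multiset.sum_map_mul_left]
@[simp] lemma wt_single (p : ℝ≥0) (a : A) : wt ({(p,a)} : MD A) = p := by simp [wt]
@[simp] lemma exp_zero (f : A → ℝ≥0) : exp f (0 : MD A) = 0 := rfl
@[simp] lemma exp_add (f : A → ℝ≥0) (μ ν : MD A) : exp f (μ + ν) = exp f μ + exp f ν := by
  simp [exp]
@[simp] lemma exp_smul (f : A → ℝ≥0) (p : ℝ≥0) (μ : MD A) :
    exp f (smul p μ) = p * exp f μ := by
  simp only [exp, smul, Multiset.map_map, Function.comp]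
  rw [← Multiset.sum_map_mul_left]; simp [mul_assoc]
@[simp] lemma exp_single (f : A → ℝ≥0) (p : ℝ≥0) (a : A) :
    exp f ({(p,a)} : MD A) = p * f a := by simp [exp]
lemma wt_finsum {ι : Type*} (s : Finset ι) (g : ι → MD A) :
    wt (∑ i ∈ s, g i) = ∑ i ∈ s, wt (g i) :=
  map_sum (⟨⟨wt, wt_zero⟩, wt_add⟩ : MD A →+ ℝ≥0) g s
lemma exp_finsum {ι : Type*} (f : A → ℝ≥0) (s : Finset ι) (g : ι → MD A) :
    exp f (∑ i ∈ s, g i) = ∑ i ∈ s, exp f (g i) :=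
  map_sum (⟨⟨exp f, exp_zero f⟩, exp_add f⟩ : MD A →+ ℝ≥0) g s
@[simp] lemma smul_single (p q : ℝ≥0) (a : A) :
    smul p ({(q, a)} : MD A) = {(p * q, a)} := by simp [smul]
end MD
@[simp] lemma FinDist.wt_toMD (d : FinDist A) : MD.wt d.toMD = 1 := by
  simp only [MD.wt, FinDist.toMD, Multiset.map_map, Function.comp]
  exact d.sum_one
@[simp] lemma MD.exp_toMD (f : A → ℝ≥0) (d : FinDist A) :
    MD.exp f d.toMD = FinDist.exp f d := by
  simp only [MD.exp, FinDist.toMD, Multiset.map_map, Function.comp]; rfl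
end Helpers

section StepLemmas
variable {A : Type*} {P : PARS A}

lemma wt_step_le {μ ρ : MD A} (h : P.Step μ ρ) : MD.wt ρ ≤ MD.wt μ := by
  induction h with
  | term a _ => simp
  | rule a d _ => simp
  | conv n p μ ρ hp hs ih =>
      rw [MD.wt_finsum, MD.wt_finsum]
      exact Finset.sum_le_sum fun i _ => by
        simp only [MD.wt_smul]
        exact mul_le_mul_right (ih i) _

lemma exp_step {ε : ℝ≥0} {f : A → ℝ≥0} (hf : P.Ranking ε f)
    {μ ρ : MD A} (h : P.Step μ ρ) : ε * MD.wt ρ + MD.exp f ρ ≤ MD.exp f μ := by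
  induction h with
  | term a _ => simp
  | rule a d hd =>
      simp only [FinDist.wt_toMD, MD.exp_toMD, MD.exp_single, mul_one, one_mul]
      exact hf a d hd
  | conv n p μ ρ hp hs ih =>
      rw [MD.wt_finsum, MD.exp_finsum, MD.exp_finsum,
        Finset.mul_sum, ← Finset.sum_add_distrib]
      refine Finset.sum_le_sum fun i _ => ?_
      simp only [MD.wt_smul, MD.exp_smul]
      calc ε * (p i * MD.wt (ρ i)) + p i * MD.exp f (ρ i)
          = p i * (ε * MD.wt (ρ i) + MD.exp f (ρ i)) := by ring
        _ ≤ p i * MD.exp f (μ i) := mul_le_mul_right (ih i) _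

-- list decomposition helper
lemma sum_get_md {M : Type*} [AddCommMonoid M] (l : List (ℝ≥0 × A)) (f : ℝ≥0 × A → M) :
    (∑ i : Fin l.length, f (l.get i)) = (l.map f).sum := by
  induction l with
  | nil => simp
  | cons a t ih =>
      simp only [List.length_cons]
      rw [Fin.sum_univ_succ]
      simp [ih]

lemma md_decomp (μ : MD A) (l : List (ℝ≥0 × A)) (hl : (l : Multiset (ℝ≥0 × A)) = μ) :
    (∑ i : Fin l.length, MD.smul (l.get i).1 {(1, (l.get i).2)}) = μ := by
  have : ∀ x : ℝ≥0 × A, MD.smul x.1 {(1, x.2)} = ({x} : MD A) := by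
    intro x; simp
  have key : ∀ (l' : List (ℝ≥0 × A)),
      (l'.map (fun x => ({x} : MD A))).sum = (l' : Multiset (ℝ≥0 × A)) := by
    intro l'
    induction l' with
    | nil => simp
    | cons a t ih => simp [ih, Multiset.singleton_add]
  simp only [this]
  rw [sum_get_md l (fun x => ({x} : MD A)), key, hl]

lemma exists_step_single (P : PARS A) (a : A) : ∃ ρ, P.Step {(1, a)} ρ := by
  by_cases h : ∃ d, P a d
  · obtain ⟨d, hd⟩ := h
    exact ⟨d.toMD, PARS.Step.rule a d hd⟩
  · exact ⟨0, PARS.Step.term a fun d hd => h ⟨d, hd⟩⟩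

lemma exists_step (P : PARS A) (μ : MD A) (h : MD.wt μ ≤ 1) : ∃ ρ, P.Step μ ρ := by
  classical
  set l := μ.toList with hl
  have hlμ : (l : Multiset (ℝ≥0 × A)) = μ := Multiset.coe_toList μ
  choose ρ hρ using fun a => exists_step_single P a
  refine ⟨∑ i : Fin l.length, MD.smul (l.get i).1 (ρ (l.get i).2), ?_⟩
  have := PARS.Step.conv (P := P) l.length (fun i => (l.get i).1)
    (fun i => {(1, (l.get i).2)}) (fun i => ρ (l.get i).2) ?_ (fun i => hρ _)
  · rwa [md_decomp μ l hlμ] at this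
  · rw [sum_get_md l Prod.fst]
    rw [show (l.map Prod.fst).sum = MD.wt μ by rw [MD.wt, ← hlμ]; rfl]
    exact h
end StepLemmas

section Seq
variable {A : Type*}

/-- Auxiliary: a choice of successor preserving `wt ≤ 1`. -/
noncomputable def nextMD (P : PARS A) (x : {μ : MD A // MD.wt μ ≤ 1}) :
    {μ : MD A // MD.wt μ ≤ 1} :=
  ⟨(exists_step P x.1 x.2).choose,
    le_trans (wt_step_le (exists_step P x.1 x.2).choose_spec) x.2⟩

lemma nextMD_step (P : PARS A) (x : {μ : MD A // MD.wt μ ≤ 1}) :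
    P.Step x.1 (nextMD P x).1 :=
  (exists_step P x.1 x.2).choose_spec

lemma exists_redseq (P : PARS A) (μ : MD A) (h : MD.wt μ ≤ 1) :
    ∃ μs, P.RedSeqFrom μ μs := by
  refine ⟨fun n => ((nextMD P)^[n] ⟨μ, h⟩).1, rfl, fun n => ?_⟩
  show P.Step ((nextMD P)^[n] ⟨μ, h⟩).1 ((nextMD P)^[n+1] ⟨μ, h⟩).1
  rw [Function.iterate_succ_apply']
  exact nextMD_step P _

end Seq

section Sound
variable {A : Type*}

lemma adh_le_of_ranking {P : PARS A} {ε : ℝ≥0} {f : A → ℝ≥0}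
    (hf : P.Ranking ε f) (hε : 0 < ε) (a : A) : adh P a ≤ (f a / ε : ℝ≥0) := by
  rw [adh]
  refine iSup₂_le fun μs hμs => ?_
  obtain ⟨h0, hstep⟩ := hμs
  have key : ∀ N, ε * (∑ n ∈ Finset.range N, MD.wt (μs (n+1))) + MD.exp f (μs N) ≤ f a := by
    intro N
    induction N with
    | zero => simp [h0]
    | succ N ih =>
        rw [Finset.sum_range_succ, mul_add, add_assoc]
        calc ε * ∑ n ∈ Finset.range N, MD.wt (μs (n+1)) +
              (ε * MD.wt (μs (N+1)) + MD.exp f (μs (N+1)))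
            ≤ ε * ∑ n ∈ Finset.range N, MD.wt (μs (n+1)) + MD.exp f (μs N) :=
              add_le_add_right (exp_step hf (hstep N)) _
          _ ≤ f a := ih
  have hS : ∀ N, (∑ n ∈ Finset.range N, MD.wt (μs (n+1))) ≤ f a / ε := by
    intro N
    rw [le_div_iff₀ hε]
    calc (∑ n ∈ Finset.range N, MD.wt (μs (n+1))) * ε
        = ε * ∑ n ∈ Finset.range N, MD.wt (μs (n+1)) := mul_comm _ _
      _ ≤ f a := le_trans (le_add_of_nonneg_right zero_le) (key N)
  rw [adl, ENNReal.tsum_eq_iSup_sum]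
  refine iSup_le fun s => ?_
  obtain ⟨N, hN⟩ := s.exists_nat_subset_range
  calc (∑ n ∈ s, (MD.wt (μs (n+1)) : ℝ≥0∞))
      ≤ ∑ n ∈ Finset.range N, (MD.wt (μs (n+1)) : ℝ≥0∞) :=
        Finset.sum_le_sum_of_subset hN
    _ = ((∑ n ∈ Finset.range N, MD.wt (μs (n+1)) : ℝ≥0) : ℝ≥0∞) :=
        (ENNReal.coe_finset_sum _ _).symm
    _ ≤ (f a / ε : ℝ≥0) := ENNReal.coe_le_coe.2 (hS N)

end Sound

section Complete
variable {A : Type*}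

lemma finset_sum_singleton_md {ι : Type*} (s : Finset ι) (g : ι → ℝ≥0 × A) :
    (∑ b ∈ s, ({g b} : MD A)) = s.val.map g := by
  rw [Finset.sum]
  rw [show s.val.map (fun b => ({g b} : MD A)) = (s.val.map g).map (fun x => {x}) by
    rw [Multiset.map_map]; rfl]
  exact Multiset.sum_map_singleton _

lemma fin_sum_equiv {ι M : Type*} [AddCommMonoid M] (s : Finset ι) (F : ι → M) :
    (∑ i : Fin s.card, F (s.equivFin.symm i)) = ∑ b ∈ s, F b := by
  rw [Equiv.sum_comp s.equivFin.symm (fun b : ↥s => F ↑b)]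
  exact Finset.sum_coe_sort s F

lemma support_sum_one (d : FinDist A) : ∑ b ∈ d.w.support, d.w b = 1 := d.sum_one

noncomputable def combSeq (d : FinDist A) (a : A) (μs : A → ℕ → MD A) : ℕ → MD A
  | 0 => {(1,a)}
  | n+1 => ∑ b ∈ d.w.support, MD.smul (d.w b) (μs b n)

@[simp] lemma combSeq_zero (d : FinDist A) (a : A) (μs : A → ℕ → MD A) :
    combSeq d a μs 0 = {(1,a)} := rfl
@[simp] lemma combSeq_succ (d : FinDist A) (a : A) (μs : A → ℕ → MD A) (n : ℕ) :
    combSeq d a μs (n+1) = ∑ b ∈ d.w.support, MD.smul (d.w b) (μs b n) := rfl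

lemma adh_ge_comb {P : PARS A} {a : A} {d : FinDist A} (had : P a d)
    (μs : A → ℕ → MD A) (hred : ∀ b, P.RedSeqFrom {(1,b)} (μs b)) :
    1 + ∑ b ∈ d.w.support, (d.w b : ℝ≥0∞) * adl (μs b) ≤ adh P a := by
  classical
  have hν1 : combSeq d a μs 1 = d.toMD := by
    rw [combSeq_succ]
    rw [show (∑ b ∈ d.w.support, MD.smul (d.w b) (μs b 0))
        = ∑ b ∈ d.w.support, ({(d.w b, b)} : MD A) from
      Finset.sum_congr rfl fun b _ => by rw [(hred b).1, MD.smul_single, mul_one]]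
    rw [finset_sum_singleton_md]
    rfl
  have hredν : P.RedSeqFrom {(1,a)} (combSeq d a μs) := by
    refine ⟨rfl, fun n => ?_⟩
    cases n with
    | zero =>
        rw [show (0:ℕ)+1 = 1 from rfl, hν1, combSeq_zero]
        exact PARS.Step.rule a d had
    | succ n =>
        rw [combSeq_succ, combSeq_succ]
        have hc := PARS.Step.conv (P := P) d.w.support.card
          (fun i => d.w (d.w.support.equivFin.symm i))
          (fun i => μs (d.w.support.equivFin.symm i) n)
          (fun i => μs (d.w.support.equivFin.symm i) (n+1))
          (by rw [fin_sum_equiv d.w.support (fun b => d.w b), support_sum_one])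
          (fun i => (hred _).2 n)
        rwa [fin_sum_equiv d.w.support (fun b => MD.smul (d.w b) (μs b n)),
          fin_sum_equiv d.w.support (fun b => MD.smul (d.w b) (μs b (n+1)))] at hc
  have hadl : adl (combSeq d a μs) = 1 + ∑ b ∈ d.w.support, (d.w b : ℝ≥0∞) * adl (μs b) := by
    rw [adl, tsum_eq_zero_add' ENNReal.summable]
    congr 1
    · rw [show (0:ℕ)+1 = 1 from rfl, hν1]; simp
    · have hterm : ∀ n : ℕ, ((MD.wt (combSeq d a μs (n+1+1)) : ℝ≥0∞))
          = ∑ b ∈ d.w.support, (d.w b : ℝ≥0∞) * (MD.wt (μs b (n+1)) : ℝ≥0∞) := by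
        intro n
        rw [combSeq_succ, MD.wt_finsum, ENNReal.coe_finset_sum]
        exact Finset.sum_congr rfl fun b _ => by rw [MD.wt_smul, ENNReal.coe_mul]
      rw [tsum_congr hterm, Summable.tsum_finsetSum (fun b _ => ENNReal.summable)]
      exact Finset.sum_congr rfl fun b _ => ENNReal.tsum_mul_left
  rw [← hadl, adh]
  exact le_iSup₂_of_le (combSeq d a μs) hredν le_rfl

lemma exists_seq_close {P : PARS A} (b : A) (hb : adh P b ≠ ⊤) {η : ℝ≥0} (hη : 0 < η) :
    ∃ μs, P.RedSeqFrom {(1,b)} μs ∧ adh P b ≤ adl μs + η := by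
  rcases eq_or_ne (adh P b) 0 with h0 | h0
  · obtain ⟨μs, hμs⟩ := exists_redseq P {(1,b)} (by simp)
    exact ⟨μs, hμs, by simp [h0]⟩
  · have hlt : adh P b - η < adh P b :=
      ENNReal.sub_lt_self hb h0 (by exact_mod_cast hη.ne')
    have h2 : adh P b - ↑η < ⨆ (μs : ℕ → MD A) (_ : P.RedSeqFrom {(1,b)} μs), adl μs := by
      rw [← adh]; exact hlt
    obtain ⟨μs, hμs⟩ := lt_iSup_iff.mp h2
    obtain ⟨hredμ, hlt2⟩ := lt_iSup_iff.mp hμs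
    exact ⟨μs, hredμ, tsub_le_iff_right.mp hlt2.le⟩

lemma adh_rule {P : PARS A} (hS : PARS.SAST P) {a : A} {d : FinDist A} (had : P a d) :
    1 + ∑ b ∈ d.w.support, (d.w b : ℝ≥0∞) * adh P b ≤ adh P a := by
  refine ENNReal.le_of_forall_pos_le_add fun η hη hfin => ?_
  have hchoice : ∀ b : A, ∃ μs, P.RedSeqFrom {(1,b)} μs ∧ adh P b ≤ adl μs + η :=
    fun b => exists_seq_close b (hS b).ne hη
  choose μs hred hclose using hchoice
  have H := adh_ge_comb had μs hred
  have hsum : ∑ b ∈ d.w.support, (d.w b : ℝ≥0∞) = 1 := by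
    rw [← ENNReal.coe_finset_sum, support_sum_one]; rfl
  calc 1 + ∑ b ∈ d.w.support, (d.w b : ℝ≥0∞) * adh P b
      ≤ 1 + ∑ b ∈ d.w.support, (d.w b : ℝ≥0∞) * (adl (μs b) + η) := by
        exact add_le_add_right (Finset.sum_le_sum fun b _ =>
          mul_le_mul_right (hclose b) _) 1
    _ = (1 + ∑ b ∈ d.w.support, (d.w b : ℝ≥0∞) * adl (μs b)) + η := by
        simp only [mul_add, Finset.sum_add_distrib, ← Finset.sum_mul, hsum, one_mul]
        ring
    _ ≤ adh P a + η := add_le_add_left H _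

end Complete

/-- soundness and completeness of ranking functions for SAST. -/
theorem stmt_6 {A : Type*} [Countable A] (P : PARS A) :
    P.SAST ↔ ∃ (ε : ℝ≥0) (f : A → ℝ≥0), 0 < ε ∧ P.Ranking ε f := by
  constructor
  · intro hS
    refine ⟨1, fun b => (adh P b).toNNReal, one_pos, fun a d had => ?_⟩
    have H := adh_rule hS had
    rw [ge_iff_le, ← ENNReal.coe_le_coe]
    have e1 : ((1 + FinDist.exp (fun b => (adh P b).toNNReal) d : ℝ≥0) : ℝ≥0∞)
        = 1 + ∑ b ∈ d.w.support, (d.w b : ℝ≥0∞) * adh P b := by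
      rw [ENNReal.coe_add, ENNReal.coe_one]
      congr 1
      rw [FinDist.exp, Finsupp.sum, ENNReal.coe_finset_sum]
      refine Finset.sum_congr rfl fun b _ => ?_
      rw [ENNReal.coe_mul, ENNReal.coe_toNNReal (hS b).ne]
    rw [e1, ENNReal.coe_toNNReal (hS a).ne]
    exact H
  · rintro ⟨ε, f, hε, hf⟩ a
    exact lt_of_le_of_lt (adh_le_of_ranking hf hε a) ENNReal.coe_lt_top
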